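/- Let A = (a_{ij}) ∈ (𝕊max^∨)^{n×n} be TPSD and let |A| ∈ (𝕋max)^{n×n} be its entrywise modulus. Then the multiset of 𝕋max-algebraic eigenvalues of |A|, counted with multiplicities, equals the multiset of diagonal entries {|a_{11}|, …, |a_{nn}|}. -/

import Mathlib

/-!
Common framework: the symmetrized tropical semiring 𝕊max over a linearly
ordered abelian group Γ, represented concretely: an element is either 𝟘
(represented by `none`) or a pair of a modulus `c : Γ` and a sign
(positive, negative or balanced), matching the classes of the quotient
𝕋max²/ℛ described in the paper.
-/

namespace TropPaper

inductive SSign : Type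
  | pos
  | neg
  | bal
  deriving DecidableEq

/-- The symmetrized tropical semiring 𝕊max(Γ): `none` is 𝟘, and
`some (c, s)` is the class of modulus `c` and sign `s`. -/
def Smax (Γ : Type) : Type := Option (Γ × SSign)

/-- Γ is divisible. -/
def DivisibleGrp (Γ : Type) [AddCommGroup Γ] : Prop :=
  ∀ k : ℕ, 0 < k → ∀ a : Γ, ∃ b : Γ, k • b = a

section Defs

variable {Γ : Type} [AddCommGroup Γ] [LinearOrder Γ] [IsOrderedAddMonoid Γ]

/-- 𝟘 -/
def szero : Smax Γ := none

/-- 𝟙 -/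
def sone : Smax Γ := some ((0 : Γ), SSign.pos)

/-- modulus |·| : 𝕊max → 𝕋max = WithBot Γ -/
def smod : Smax Γ → WithBot Γ
  | none => ⊥
  | some (c, _) => (c : WithBot Γ)

def sgnMul : SSign → SSign → SSign
  | SSign.pos, t => t
  | SSign.neg, SSign.pos => SSign.neg
  | SSign.neg, SSign.neg => SSign.pos
  | SSign.neg, SSign.bal => SSign.bal
  | SSign.bal, _ => SSign.bal

/-- ⊕ on 𝕊max -/
def sadd : Smax Γ → Smax Γ → Smax Γ
  | none, b => b
  | some a, none => some a
  | some (c, s), some (d, t) =>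
      if c < d then some (d, t)
      else if d < c then some (c, s)
      else some (c, if s = t then s else SSign.bal)

/-- ⊖ (unary) on 𝕊max -/
def sneg : Smax Γ → Smax Γ
  | none => none
  | some (c, SSign.pos) => some (c, SSign.neg)
  | some (c, SSign.neg) => some (c, SSign.pos)
  | some (c, SSign.bal) => some (c, SSign.bal)

/-- ⊙ on 𝕊max -/
def smul : Smax Γ → Smax Γ → Smax Γ
  | none, _ => none
  | some _, none => none
  | some (c, s), some (d, t) => some (c + d, sgnMul s t)

/-- a ⊖ b -/
def ssub (a b : Smax Γ) : Smax Γ := sadd a (sneg b)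

/-- a° = a ⊖ a -/
def sbal (a : Smax Γ) : Smax Γ := ssub a a

/-- the positive element with the same modulus (|·| seen inside 𝕊max⊕) -/
def sabs : Smax Γ → Smax Γ
  | none => none
  | some (c, _) => some (c, SSign.pos)

/-- multiplicative inverse (of invertible, i.e. signed nonzero, elements) -/
def sinv : Smax Γ → Smax Γ
  | none => none
  | some (c, s) => some (-c, s)

/-- a^{⊙k} -/
def spow (a : Smax Γ) : ℕ → Smax Γ
  | 0 => sone
  | k + 1 => smul a (spow a k)

/-- membership in 𝕊max° (balanced elements together with 𝟘) -/
def IsBal : Smax Γ → Prop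
  | none => True
  | some (_, s) => s = SSign.bal

/-- membership in 𝕊max⊕ (positive elements together with 𝟘) -/
def IsPos : Smax Γ → Prop
  | none => True
  | some (_, s) => s = SSign.pos

/-- membership in 𝕊max^∨ (signed elements) -/
def IsSigned : Smax Γ → Prop
  | none => True
  | some (_, s) => s ≠ SSign.bal

/-- the balance relation a ∇ b -/
def Balance (a b : Smax Γ) : Prop := IsBal (ssub a b)

/-- a ⪯ b -/
def natLe (a b : Smax Γ) : Prop := sadd a b = b

/-- a ≤ b :⟺ b ⊖ a ∈ 𝕊max⊕ ∪ 𝕊max° -/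
def sle (a b : Smax Γ) : Prop := IsPos (ssub b a) ∨ IsBal (ssub b a)

/-- a < b :⟺ b ⊖ a ∈ 𝕊max⊕ ∖ {𝟘} -/
def slt (a b : Smax Γ) : Prop := IsPos (ssub b a) ∧ ssub b a ≠ szero

/-- finite ⊕-sum over a list -/
def sumS {α : Type} (l : List α) (f : α → Smax Γ) : Smax Γ :=
  (l.map f).foldr sadd szero

/-- finite ⊙-product over a list -/
def prodS {α : Type} (l : List α) (f : α → Smax Γ) : Smax Γ :=
  (l.map f).foldr smul sone

/-- the zero vector -/
def zeroVecS {n : ℕ} : Fin n → Smax Γ := fun _ => szero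

def VecSigned {n : ℕ} (x : Fin n → Smax Γ) : Prop := ∀ i, IsSigned (x i)

def MatSigned {n : ℕ} (A : Matrix (Fin n) (Fin n) (Smax Γ)) : Prop :=
  ∀ i j, IsSigned (A i j)

def SymmS {n : ℕ} (A : Matrix (Fin n) (Fin n) (Smax Γ)) : Prop :=
  ∀ i j, A i j = A j i

/-- A ⊙ v -/
def matVecS {n : ℕ} (A : Matrix (Fin n) (Fin n) (Smax Γ)) (v : Fin n → Smax Γ) :
    Fin n → Smax Γ :=
  fun i => sumS (List.finRange n) fun j => smul (A i j) (v j)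

/-- A ⊙ B -/
def matMulS {n : ℕ} (A B : Matrix (Fin n) (Fin n) (Smax Γ)) :
    Matrix (Fin n) (Fin n) (Smax Γ) :=
  Matrix.of fun i j => sumS (List.finRange n) fun l => smul (A i l) (B l j)

/-- the identity matrix I -/
def idMatS {n : ℕ} : Matrix (Fin n) (Fin n) (Smax Γ) :=
  Matrix.of fun i j => if i = j then sone else szero

/-- xᵀ ⊙ A ⊙ x -/
def quadFormS {n : ℕ} (A : Matrix (Fin n) (Fin n) (Smax Γ)) (x : Fin n → Smax Γ) :
    Smax Γ :=
  sumS (List.finRange n) fun i => sumS (List.finRange n) fun j =>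
    smul (x i) (smul (A i j) (x j))

/-- tropical positive definiteness (the quadratic-form condition) -/
def TPD {n : ℕ} (A : Matrix (Fin n) (Fin n) (Smax Γ)) : Prop :=
  ∀ x : Fin n → Smax Γ, VecSigned x → x ≠ zeroVecS → slt szero (quadFormS A x)

/-- tropical positive semidefiniteness -/
def TPSD {n : ℕ} (A : Matrix (Fin n) (Fin n) (Smax Γ)) : Prop :=
  ∀ x : Fin n → Smax Γ, VecSigned x → x ≠ zeroVecS → sle szero (quadFormS A x)

/-- sgn(π) ∈ {𝟙, ⊖𝟙} -/
def permSignS {n : ℕ} (π : Equiv.Perm (Fin n)) : Smax Γ :=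
  if (Equiv.Perm.sign π : ℤ) = 1 then sone else sneg sone

/-- the determinant over 𝕊max -/
noncomputable def detS {n : ℕ} (M : Matrix (Fin n) (Fin n) (Smax Γ)) : Smax Γ :=
  sumS (Finset.univ : Finset (Equiv.Perm (Fin n))).toList fun π =>
    smul (permSignS π) (prodS (List.finRange n) fun i => M i (π i))

/-- the adjugate matrix over 𝕊max -/
noncomputable def adjS {n : ℕ} (M : Matrix (Fin (n+1)) (Fin (n+1)) (Smax Γ)) :
    Matrix (Fin (n+1)) (Fin (n+1)) (Smax Γ) :=
  Matrix.of fun i j =>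
    smul (spow (sneg sone) (i.val + j.val))
      (detS (Matrix.of fun a b : Fin n => M (Fin.succAbove j a) (Fin.succAbove i b)))

/-- γ ⊙ I ⊖ A -/
def charMatS {n : ℕ} (γ : Smax Γ) (A : Matrix (Fin n) (Fin n) (Smax Γ)) :
    Matrix (Fin n) (Fin n) (Smax Γ) :=
  Matrix.of fun i j => ssub (smul γ (idMatS i j)) (A i j)

/-- tr_k(A) = ⊕_{|K| = k} det(A[K,K]) -/
noncomputable def trkS {n : ℕ} (k : ℕ) (A : Matrix (Fin n) (Fin n) (Smax Γ)) : Smax Γ :=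
  sumS ((Finset.univ : Finset (Fin n)).powersetCard k).attach.toList fun K =>
    detS (Matrix.of fun a b : Fin k =>
      A (K.1.orderEmbOfFin (Finset.mem_powersetCard.mp K.2).2 a)
        (K.1.orderEmbOfFin (Finset.mem_powersetCard.mp K.2).2 b))

/-- matrix power A^{⊙k} -/
def matPowS {n : ℕ} (A : Matrix (Fin n) (Fin n) (Smax Γ)) :
    ℕ → Matrix (Fin n) (Fin n) (Smax Γ)
  | 0 => idMatS
  | k + 1 => matMulS A (matPowS A k)

/-- partial Kleene sums I ⊕ A ⊕ ⋯ ⊕ A^{⊙m} -/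
def starPartialS {n : ℕ} (A : Matrix (Fin n) (Fin n) (Smax Γ)) (m : ℕ) :
    Matrix (Fin n) (Fin n) (Smax Γ) :=
  Matrix.of fun i j => sumS (List.range (m+1)) fun k => matPowS A k i j

/-- the diagonal matrix D^(k) with diagonal (γ₁,…,γ_{k−1},𝟘,…,𝟘) (0-based k) -/
def DmatS {n : ℕ} (A : Matrix (Fin n) (Fin n) (Smax Γ)) (k : Fin n) :
    Matrix (Fin n) (Fin n) (Smax Γ) :=
  Matrix.of fun i j => if i = j ∧ i < k then A i i else szero

/-- the complementary matrix A^(k) -/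
def AmatS {n : ℕ} (A : Matrix (Fin n) (Fin n) (Smax Γ)) (k : Fin n) :
    Matrix (Fin n) (Fin n) (Smax Γ) :=
  Matrix.of fun i j => if i ≠ j ∨ k ≤ i then A i j else szero

/-- M = (γ⊙I ⊖ D^(k))^{⊙−1} ⊙ A^(k) -/
def MmatS {n : ℕ} (A : Matrix (Fin n) (Fin n) (Smax Γ)) (k : Fin n) :
    Matrix (Fin n) (Fin n) (Smax Γ) :=
  Matrix.of fun i j =>
    smul (sinv (if i < k then sneg (A i i) else A k k)) (AmatS A k i j)

/-- λ_k = (⊖𝟙)^{⊙(k−1)} ⊙ γ₁ ⊙ ⋯ ⊙ γ_{k−1} ⊙ γ^{⊙(n−k)} (0-based k, size n) -/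
def lamkS {n : ℕ} (A : Matrix (Fin n) (Fin n) (Smax Γ)) (k : Fin n) : Smax Γ :=
  smul (spow (sneg sone) k.val)
    (smul (prodS ((List.finRange n).filter (fun i => i < k)) fun i => A i i)
      (spow (A k k) (n - 1 - k.val)))

/-- irreducibility: the digraph of nonzero entries is strongly connected -/
def IrreducibleS {n : ℕ} (A : Matrix (Fin n) (Fin n) (Smax Γ)) : Prop :=
  ∀ i j : Fin n, Relation.ReflTransGen (fun a b => A a b ≠ szero) i j

/-- diagonal entries sorted non-increasingly for ⪯ -/
def DiagSortedS {n : ℕ} (A : Matrix (Fin n) (Fin n) (Smax Γ)) : Prop :=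
  ∀ i j : Fin n, i ≤ j → natLe (A j j) (A i i)

/-! 𝕋max-side notions (for the characteristic polynomial of |A|). -/

/-- finite max over a list in 𝕋max -/
def sumT {α : Type} (l : List α) (f : α → WithBot Γ) : WithBot Γ :=
  (l.map f).foldr max ⊥

/-- finite ⊙-product over a list in 𝕋max -/
def prodT {α : Type} (l : List α) (f : α → WithBot Γ) : WithBot Γ :=
  (l.map f).foldr (· + ·) (0 : WithBot Γ)

/-- the permanent over 𝕋max -/
noncomputable def perT {n : ℕ} (M : Matrix (Fin n) (Fin n) (WithBot Γ)) : WithBot Γ :=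
  sumT (Finset.univ : Finset (Equiv.Perm (Fin n))).toList fun π =>
    prodT (List.finRange n) fun i => M i (π i)

/-- coefficient of X^k in the 𝕋max-characteristic polynomial of B -/
noncomputable def charCoeffT {n : ℕ} (B : Matrix (Fin n) (Fin n) (WithBot Γ)) (k : ℕ) : WithBot Γ :=
  if k ≤ n then
    sumT ((Finset.univ : Finset (Fin n)).powersetCard (n - k)).attach.toList fun K =>
      perT (Matrix.of fun a b : Fin (n - k) =>
        B (K.1.orderEmbOfFin (Finset.mem_powersetCard.mp K.2).2 a)
          (K.1.orderEmbOfFin (Finset.mem_powersetCard.mp K.2).2 b))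
  else ⊥

/-- multiplicity of x as a 𝕋max-root of the formal polynomial of degree ≤ n
with coefficients Q: for x = ⊥ it is the lower degree, for x = c ∈ Γ it is the
difference between the largest and smallest exponents attaining
max_k (Q_k + k·c). -/
noncomputable def rootMultT (n : ℕ) (Q : ℕ → WithBot Γ) (x : WithBot Γ) : ℕ :=
  WithBot.recBotCoe
    (sInf {k | Q k ≠ ⊥})
    (fun c =>
      sSup {k | k ≤ n ∧ Q k + ((k • c : Γ) : WithBot Γ)
              = sumT (List.range (n+1)) (fun l => Q l + ((l • c : Γ) : WithBot Γ))}
        - sInf {k | k ≤ n ∧ Q k + ((k • c : Γ) : WithBot Γ)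
              = sumT (List.range (n+1)) (fun l => Q l + ((l • c : Γ) : WithBot Γ))})
    x

end Defs

/-- the signed valuation associated with a valuation v on an ordered field L -/
def svMap {Γ : Type} [AddCommGroup Γ] [LinearOrder Γ] [IsOrderedAddMonoid Γ] {L : Type} [Field L] [LinearOrder L] [IsStrictOrderedRing L]
    (v : L → WithBot Γ) (b : L) : Smax Γ :=
  if b = 0 then szero
  else if 0 < b then WithBot.recBotCoe szero (fun c => some (c, SSign.pos)) (v b)
  else WithBot.recBotCoe szero (fun c => some (c, SSign.neg)) (v b)

end TropPaper

/-!
Testing the quadratic form on `x = 𝟙 eᵢ ⊖ sgn(aᵢⱼ) s eⱼ`, with `s ∈ Γ` chosen (by density of `Γ`)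
so that the two equal cross terms `⊖ s ⊙ |aᵢⱼ|` dominate the diagonal terms, shows that a TPSD
matrix satisfies `|aᵢⱼ|^2 ≤ |aᵢᵢ| ⊙ |aⱼⱼ|`. Summing this over a permutation bounds every
permutation weight by the diagonal one, so each principal permanent of `|A|` is the product of its
diagonal entries and the 𝕋max-characteristic polynomial of `|A|` is `⊙ᵢ (X ⊕ |aᵢᵢ|)`, whose
roots are the `|aᵢᵢ|`.
-/

namespace TropPaper

section SymmetrizedSums

lemma smod_smul {Γ : Type} [AddCommGroup Γ] (a b : Smax Γ) :
    smod (smul a b) = smod a + smod b := by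
  rcases a with _ | ⟨c, s⟩ <;> rcases b with _ | ⟨d, t⟩ <;> rfl

lemma smul_szero {Γ : Type} [AddCommGroup Γ] (a : Smax Γ) : smul a szero = szero := by
  rcases a with _ | ⟨c, s⟩ <;> rfl

variable {Γ : Type} [LinearOrder Γ]

lemma smod_sadd (a b : Smax Γ) : smod (sadd a b) = max (smod a) (smod b) := by
  rcases a with _ | ⟨c, s⟩ <;> rcases b with _ | ⟨d, t⟩
  · rfl
  · simp [sadd, smod]
  · simp [sadd, smod]
  · rcases lt_trichotomy c d with h | rfl | h
    · simp [sadd, smod, h, h.le]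
    · simp [sadd, smod]
    · simp [sadd, smod, h, h.le, h.not_gt]

lemma sadd_self (a : Smax Γ) : sadd a a = a := by
  rcases a with _ | ⟨c, s⟩ <;> simp [sadd] <;> rfl

lemma sadd_eq_right_of_smod_lt {a b : Smax Γ} (h : smod a < smod b) : sadd a b = b := by
  rcases a with _ | ⟨c, s⟩ <;> rcases b with _ | ⟨d, t⟩
  · rfl
  · rfl
  · exact absurd h not_lt_bot
  · have h' : c < d := WithBot.coe_lt_coe.1 h
    simp [sadd, h']; rfl

lemma sadd_eq_left_of_smod_lt {a b : Smax Γ} (h : smod b < smod a) : sadd a b = a := by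
  rcases a with _ | ⟨c, s⟩ <;> rcases b with _ | ⟨d, t⟩
  · rfl
  · exact absurd h not_lt_bot
  · rfl
  · have h' : d < c := WithBot.coe_lt_coe.1 h
    simp [sadd, h', h'.not_gt]; rfl

lemma sumS_cons {α : Type} (a : α) (l : List α) (f : α → Smax Γ) :
    sumS (a :: l) f = sadd (f a) (sumS l f) := rfl

lemma sumS_eq_or_smod_lt {α : Type} {l : List α} {f : α → Smax Γ} {v : Smax Γ}
    (hl : ∀ a ∈ l, f a = v ∨ smod (f a) < smod v) : sumS l f = v ∨ smod (sumS l f) < smod v := by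
  induction l with
  | nil =>
    rcases v with _ | ⟨c, s⟩
    · exact Or.inl rfl
    · exact Or.inr (WithBot.bot_lt_coe c)
  | cons a l ih =>
    rw [sumS_cons]
    rcases hl a List.mem_cons_self with ha | ha <;>
      rcases ih fun b hb => hl b (List.mem_cons_of_mem a hb) with hr | hr
    · rw [ha, hr, sadd_self]; exact Or.inl rfl
    · rw [ha]; exact Or.inl (sadd_eq_left_of_smod_lt hr)
    · rw [hr]; exact Or.inl (sadd_eq_right_of_smod_lt ha)
    · exact Or.inr (by rw [smod_sadd]; exact max_lt ha hr)

lemma smod_le_smod_sumS {α : Type} {l : List α} (f : α → Smax Γ) {a : α} (ha : a ∈ l) :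
    smod (f a) ≤ smod (sumS l f) := by
  induction l with
  | nil => simp at ha
  | cons b l ih =>
    rw [sumS_cons, smod_sadd]
    rcases List.mem_cons.1 ha with rfl | ha
    · exact le_max_left _ _
    · exact (ih ha).trans (le_max_right _ _)

lemma sumS_eq_of_dominant {α : Type} {l : List α} {f : α → Smax Γ} {v : Smax Γ}
    (hl : ∀ a ∈ l, f a = v ∨ smod (f a) < smod v) (hv : ∃ a ∈ l, f a = v) : sumS l f = v := by
  obtain ⟨a, ha, hfa⟩ := hv
  refine (sumS_eq_or_smod_lt hl).resolve_right fun hlt => ?_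
  exact (smod_le_smod_sumS f ha).not_gt (hfa ▸ hlt)

lemma quadFormS_eq_of_dominant [AddCommGroup Γ] {n : ℕ} {A : Matrix (Fin n) (Fin n) (Smax Γ)}
    {x : Fin n → Smax Γ} {v : Smax Γ}
    (h : ∀ a b, smul (x a) (smul (A a b) (x b)) = v ∨
      smod (smul (x a) (smul (A a b) (x b))) < smod v)
    {i j : Fin n} (hij : smul (x i) (smul (A i j) (x j)) = v) : quadFormS A x = v :=
  sumS_eq_of_dominant (fun a _ => sumS_eq_or_smod_lt fun b _ => h a b)
    ⟨i, List.mem_finRange i, sumS_eq_of_dominant (fun b _ => h i b) ⟨j, List.mem_finRange j, hij⟩⟩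

end SymmetrizedSums

section DiagonalDominance

variable {Γ : Type} [AddCommGroup Γ] [LinearOrder Γ] [IsOrderedAddMonoid Γ]

lemma DivisibleGrp.denselyOrdered (hdiv : DivisibleGrp Γ) : DenselyOrdered Γ := by
  refine ⟨fun a b hab => ?_⟩
  obtain ⟨m, hm⟩ := hdiv 2 two_pos (a + b)
  refine ⟨m, lt_of_nsmul_lt_nsmul_right 2 ?_, lt_of_nsmul_lt_nsmul_right 2 ?_⟩
  · rw [hm, two_nsmul]; exact add_lt_add_right hab a
  · rw [hm, two_nsmul]; exact add_lt_add_left hab b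

lemma exists_lt_coe_add_and_add_coe_lt [DenselyOrdered Γ] [Nontrivial Γ] {p q : WithBot Γ}
    {u : Γ} (h : p + q < ↑(u + u)) : ∃ s : Γ, p < ↑(s + u) ∧ q + ↑s < ↑u := by
  induction p using WithBot.recBotCoe with
  | bot =>
    induction q using WithBot.recBotCoe with
    | bot => exact ⟨0, WithBot.bot_lt_coe _, WithBot.bot_lt_coe u⟩
    | coe b =>
      obtain ⟨s, hs⟩ := exists_lt (u - b)
      exact ⟨s, WithBot.bot_lt_coe _, mod_cast lt_sub_iff_add_lt'.1 hs⟩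
  | coe a =>
    induction q using WithBot.recBotCoe with
    | bot =>
      obtain ⟨s, hs⟩ := exists_gt (a - u)
      exact ⟨s, mod_cast sub_lt_iff_lt_add.1 hs, WithBot.bot_lt_coe u⟩
    | coe b =>
      have hab : a - u < u - b := sub_lt_sub_iff.2 (mod_cast h)
      obtain ⟨s, hs₁, hs₂⟩ := exists_between hab
      exact ⟨s, mod_cast sub_lt_iff_lt_add.1 hs₁, mod_cast lt_sub_iff_add_lt'.1 hs₂⟩

def pairVecS {n : ℕ} (i j : Fin n) (a b : Smax Γ) : Fin n → Smax Γ :=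
  fun l => if l = i then a else if l = j then b else szero

lemma quadFormS_pairVecS {n : ℕ} {A : Matrix (Fin n) (Fin n) (Smax Γ)} (hsym : SymmS A)
    {i j : Fin n} (hij : i ≠ j) {u s : Γ} {σ : SSign} (hσ : σ ≠ SSign.bal)
    (hAij : A i j = some (u, σ)) (hsi : smod (A i i) < ↑(s + u)) (hsj : smod (A j j) + ↑s < ↑u) :
    quadFormS A (pairVecS i j sone (some (s, sgnMul SSign.neg σ))) = some (s + u, SSign.neg) := by
  set x := pairVecS i j sone (some (s, sgnMul SSign.neg σ))
  have hxi : x i = sone := if_pos rfl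
  have hxj : x j = some (s, sgnMul SSign.neg σ) := (if_neg hij.symm).trans (if_pos rfl)
  have hx : ∀ l, l = i ∨ l = j ∨ x l = szero := fun l => by
    by_cases hli : l = i
    · exact Or.inl hli
    by_cases hlj : l = j
    · exact Or.inr (Or.inl hlj)
    · exact Or.inr (Or.inr ((if_neg hli).trans (if_neg hlj)))
  have hcross : smul (x i) (smul (A i j) (x j)) = some (s + u, SSign.neg) := by
    rw [hxi, hxj, hAij]
    show some (0 + (u + s), sgnMul SSign.pos (sgnMul σ (sgnMul SSign.neg σ))) = _
    rw [zero_add, add_comm]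
    rcases σ with _ | _ | _ <;> first | exact absurd rfl hσ | rfl
  refine quadFormS_eq_of_dominant (fun a b => ?_) hcross
  rcases hx a with rfl | rfl | ha <;> rcases hx b with rfl | rfl | hb
  · right
    rw [smod_smul, smod_smul, hxi]
    show ((0 : Γ) : WithBot Γ) + (smod _ + ((0 : Γ) : WithBot Γ)) < ((s + u : Γ) : WithBot Γ)
    simpa using hsi
  · exact Or.inl hcross
  · right; rw [hb, smul_szero, smul_szero]; exact WithBot.bot_lt_coe _
  · left
    rw [hxi, hxj, hsym, hAij]
    show some (s + (u + 0), sgnMul (sgnMul SSign.neg σ) (sgnMul σ SSign.pos)) = _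
    rw [add_zero]
    rcases σ with _ | _ | _ <;> first | exact absurd rfl hσ | rfl
  · right
    rw [smod_smul, smod_smul, hxj]
    show (s : WithBot Γ) + (smod _ + (s : WithBot Γ)) < ((s + u : Γ) : WithBot Γ)
    rwa [WithBot.coe_add, WithBot.add_lt_add_iff_left WithBot.coe_ne_bot]
  · right; rw [hb, smul_szero, smul_szero]; exact WithBot.bot_lt_coe _
  all_goals right; rw [ha]; exact WithBot.bot_lt_coe _

lemma smod_add_smod_le_of_tpsd [DenselyOrdered Γ] [Nontrivial Γ] {n : ℕ}
    {A : Matrix (Fin n) (Fin n) (Smax Γ)} (hsym : SymmS A) (hsgn : MatSigned A) (hA : TPSD A)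
    (i j : Fin n) : smod (A i j) + smod (A i j) ≤ smod (A i i) + smod (A j j) := by
  rcases eq_or_ne i j with rfl | hij
  · exact le_rfl
  by_contra! hlt
  obtain ⟨u, σ, hAij⟩ : ∃ u σ, A i j = some (u, σ) := by
    rcases hAij : A i j with _ | ⟨u, σ⟩
    · rw [hAij] at hlt; exact absurd hlt not_lt_bot
    · exact ⟨u, σ, rfl⟩
  have hσ : σ ≠ SSign.bal := by
    have h := hsgn i j
    rwa [hAij] at h
  rw [hAij] at hlt
  obtain ⟨s, hsi, hsj⟩ := exists_lt_coe_add_and_add_coe_lt hlt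
  set x := pairVecS i j sone (some (s, sgnMul SSign.neg σ))
  have hxs : VecSigned x := fun l => by
    by_cases hli : l = i
    · rw [show x l = sone from if_pos hli]; exact SSign.noConfusion
    by_cases hlj : l = j
    · rw [show x l = some (s, sgnMul SSign.neg σ) from (if_neg hli).trans (if_pos hlj)]
      rcases σ with _ | _ | _ <;> first | exact absurd rfl hσ | exact SSign.noConfusion
    · rw [show x l = szero from (if_neg hli).trans (if_neg hlj)]; trivial
  have hx0 : x ≠ zeroVecS := fun h => Option.some_ne_none _ ((if_pos rfl).symm.trans (congrFun h i))
  have hq := hA x hxs hx0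
  rw [quadFormS_pairVecS hsym hij hσ hAij hsi hsj] at hq
  rcases hq with h | h <;> cases h

end DiagonalDominance

section MaxPlus

open Finset

lemma prodT_finRange {Γ : Type} [AddCommGroup Γ] {m : ℕ} (f : Fin m → WithBot Γ) :
    prodT (List.finRange m) f = ∑ a, f a := by
  rw [Fin.sum_univ_def, List.sum_eq_foldr]
  rfl

variable {Γ : Type} [LinearOrder Γ]

lemma le_sumT {α : Type} {l : List α} (f : α → WithBot Γ) {a : α} (ha : a ∈ l) :
    f a ≤ sumT l f := by
  induction l with
  | nil => simp at ha
  | cons b l ih =>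
    rcases List.mem_cons.1 ha with rfl | ha
    · exact le_max_left _ _
    · exact (ih ha).trans (le_max_right _ _)

lemma sumT_le {α : Type} {l : List α} {f : α → WithBot Γ} {b : WithBot Γ}
    (h : ∀ a ∈ l, f a ≤ b) : sumT l f ≤ b := by
  induction l with
  | nil => exact bot_le
  | cons a l ih =>
    exact max_le (h a List.mem_cons_self) (ih fun x hx => h x (List.mem_cons_of_mem a hx))

lemma sumT_toList {α : Type} (s : Finset α) (f : α → WithBot Γ) : sumT s.toList f = s.sup f :=
  le_antisymm (sumT_le fun _ ha => le_sup (mem_toList.1 ha))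
    (Finset.sup_le fun _ ha => le_sumT f (mem_toList.2 ha))

variable [AddCommGroup Γ] [IsOrderedAddMonoid Γ]

lemma le_of_add_self_le_add_self {x y : WithBot Γ} (h : x + x ≤ y + y) : x ≤ y := by
  by_contra! hyx
  lift x to Γ using hyx.ne_bot
  induction y using WithBot.recBotCoe with
  | bot => exact WithBot.coe_ne_bot (le_bot_iff.1 h)
  | coe b =>
    have hb : b < x := WithBot.coe_lt_coe.1 hyx
    exact h.not_gt (mod_cast add_lt_add hb hb)

lemma sum_lt_sum_of_ne_bot {ι : Type} {s : Finset ι} {f g : ι → WithBot Γ}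
    (hle : ∀ i ∈ s, f i ≤ g i) (hg : ∀ i ∈ s, g i ≠ ⊥) {i : ι} (hi : i ∈ s) (hlt : f i < g i) :
    ∑ i ∈ s, f i < ∑ i ∈ s, g i := by
  classical
  rw [← add_sum_erase s f hi, ← add_sum_erase s g hi]
  have hrest : ∑ j ∈ s.erase i, g j ≠ ⊥ := fun h => by
    obtain ⟨j, hj, hgj⟩ := WithBot.sum_eq_bot_iff.1 h
    exact hg j (mem_of_mem_erase hj) hgj
  calc f i + ∑ j ∈ s.erase i, f j ≤ f i + ∑ j ∈ s.erase i, g j :=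
        add_le_add le_rfl (sum_le_sum fun j hj => hle j (mem_of_mem_erase hj))
    _ < g i + ∑ j ∈ s.erase i, g j := (WithBot.add_lt_add_iff_right hrest).2 hlt

lemma perT_eq_sum_diag {m : ℕ} (M : Matrix (Fin m) (Fin m) (WithBot Γ))
    (hM : ∀ a b, M a b + M a b ≤ M a a + M b b) : perT M = ∑ a, M a a := by
  rw [perT, sumT_toList]
  refine le_antisymm (Finset.sup_le fun π _ => ?_) ?_
  · rw [prodT_finRange]
    apply le_of_add_self_le_add_self
    calc (∑ a, M a (π a)) + ∑ a, M a (π a) = ∑ a, (M a (π a) + M a (π a)) :=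
          sum_add_distrib.symm
      _ ≤ ∑ a, (M a a + M (π a) (π a)) := sum_le_sum fun a _ => hM a (π a)
      _ = (∑ a, M a a) + ∑ a, M a a := by
          rw [sum_add_distrib, Equiv.sum_comp π fun a => M a a]
  · have hid := le_sup (mem_univ 1)
      (f := fun π : Equiv.Perm (Fin m) => prodT (List.finRange m) fun a => M a (π a))
    simpa [prodT_finRange] using hid

end MaxPlus

open Finset in
lemma sum_orderEmbOfFin {α β : Type*} [LinearOrder α] [AddCommMonoid β] {m : ℕ} (K : Finset α)
    (h : #K = m) (f : α → β) : ∑ a : Fin m, f (K.orderEmbOfFin h a) = ∑ i ∈ K, f i := by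
  calc ∑ a : Fin m, f (K.orderEmbOfFin h a)
      = ∑ i ∈ univ.image (K.orderEmbOfFin h), f i :=
        (sum_image fun a _ b _ hab => (K.orderEmbOfFin h).injective hab).symm
    _ = ∑ i ∈ K, f i := by rw [K.image_orderEmbOfFin_univ h]

section DiagonalCharPoly

open Finset

variable {Γ : Type} [AddCommGroup Γ] [LinearOrder Γ] {n : ℕ}

/-- The coefficients of the tropical polynomial `⊙ᵢ (X ⊕ dᵢ)`. -/
def diagCharCoeffT (d : Fin n → WithBot Γ) (k : ℕ) : WithBot Γ :=
  if k ≤ n then ((univ : Finset (Fin n)).powersetCard (n - k)).sup fun K => ∑ i ∈ K, d i else ⊥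

lemma charCoeffT_eq_diagCharCoeffT [IsOrderedAddMonoid Γ] (B : Matrix (Fin n) (Fin n) (WithBot Γ))
    (hB : ∀ i j, B i j + B i j ≤ B i i + B j j) : charCoeffT B = diagCharCoeffT fun i => B i i := by
  funext k
  unfold charCoeffT diagCharCoeffT
  split_ifs with hk
  · rw [sumT_toList, ← sup_attach (powersetCard (n - k) univ) fun K => ∑ i ∈ K, B i i]
    refine sup_congr rfl fun K _ => ?_
    refine (perT_eq_sum_diag _ fun a b => ?_).trans (sum_orderEmbOfFin K.1 _ fun i => B i i)
    exact hB _ _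
  · rfl

lemma diagCharCoeffT_ne_bot_iff {d : Fin n → WithBot Γ} {k : ℕ} :
    diagCharCoeffT d k ≠ ⊥ ↔ #{i | d i = ⊥} ≤ k ∧ k ≤ n := by
  unfold diagCharCoeffT
  split_ifs with hk
  · have hfin := card_filter_add_card_filter_not (s := univ) (p := fun i : Fin n => d i = ⊥)
    rw [card_univ, Fintype.card_fin] at hfin
    simp only [ne_eq, Finset.sup_eq_bot_iff, mem_powersetCard, subset_univ, true_and, not_forall,
      WithBot.sum_eq_bot_iff, not_exists, not_and, hk, and_true, exists_prop]
    constructor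
    · rintro ⟨K, hK, hKd⟩
      have := card_le_card fun i hi => mem_filter.2 ⟨mem_univ i, hKd i hi⟩
      omega
    · intro h
      obtain ⟨K, hKsub, hK⟩ := exists_subset_card_eq (s := {i | ¬d i = ⊥}) (n := n - k) (by omega)
      exact ⟨K, hK, fun i hi => (mem_filter.1 (hKsub hi)).2⟩
  · simp [hk]

lemma rootMultT_diagCharCoeffT_bot (d : Fin n → WithBot Γ) :
    rootMultT n (diagCharCoeffT d) ⊥ = #{i | d i = ⊥} := by
  show sInf {k | diagCharCoeffT d k ≠ ⊥} = _
  have hset : {k | diagCharCoeffT d k ≠ ⊥} = Set.Icc #{i | d i = ⊥} n :=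
    Set.ext fun k => diagCharCoeffT_ne_bot_iff
  rw [hset, csInf_Icc ((card_filter_le _ _).trans_eq (by simp))]

lemma diagCharCoeffT_add_nsmul [IsOrderedAddMonoid Γ] (d : Fin n → WithBot Γ) (c : Γ) {k : ℕ}
    (hk : k ≤ n) : diagCharCoeffT d k + ↑(k • c) =
      (powersetCard (n - k) univ).sup fun K => ∑ i, if i ∈ K then d i else ↑c := by
  rw [diagCharCoeffT, if_pos hk,
    apply_sup_eq_sup_comp_of_linearOrder (· + ((k • c : Γ) : WithBot Γ))
      (fun _ _ h => add_le_add h le_rfl) (WithBot.bot_add _)]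
  refine sup_congr rfl fun K hK => ?_
  have hKc : #Kᶜ = k := by
    rw [card_compl, Fintype.card_fin, (mem_powersetCard.1 hK).2]
    omega
  rw [Function.comp_apply, ← sum_add_sum_compl K fun i => if i ∈ K then d i else (c : WithBot Γ)]
  congr 1
  · exact sum_congr rfl fun i hi => (if_pos hi).symm
  · rw [sum_congr rfl fun i hi => if_neg (mem_compl.1 hi), sum_const, hKc, WithBot.coe_nsmul]

lemma sum_ite_mem_eq_sum_max_iff [IsOrderedAddMonoid Γ] (d : Fin n → WithBot Γ) (c : Γ)
    (K : Finset (Fin n)) : (∑ i, if i ∈ K then d i else ↑c) = ∑ i, max (d i) ↑c ↔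
      ({i | ↑c < d i} : Finset (Fin n)) ⊆ K ∧ K ⊆ ({i | ↑c ≤ d i} : Finset (Fin n)) := by
  constructor
  · intro h
    by_contra hK
    have hle : ∀ i ∈ univ, (if i ∈ K then d i else ↑c) ≤ max (d i) ↑c := fun i _ => ite_le_sup _ _ _
    have hne : ∀ i ∈ univ, max (d i) ↑c ≠ ⊥ := fun i _ =>
      ne_bot_of_le_ne_bot WithBot.coe_ne_bot (le_max_right _ _)
    rw [not_and_or, not_subset, not_subset] at hK
    rcases hK with ⟨i, hiP, hiK⟩ | ⟨i, hiK, hiZ⟩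
    · refine (sum_lt_sum_of_ne_bot hle hne (mem_univ i) ?_).ne h
      rw [if_neg hiK, max_eq_left (mem_filter.1 hiP).2.le]
      exact (mem_filter.1 hiP).2
    · refine (sum_lt_sum_of_ne_bot hle hne (mem_univ i) ?_).ne h
      have hdi : d i < ↑c := not_le.1 fun h => hiZ (mem_filter.2 ⟨mem_univ i, h⟩)
      rw [if_pos hiK, max_eq_right hdi.le]
      exact hdi
  · rintro ⟨hP, hZ⟩
    refine sum_congr rfl fun i _ => ?_
    split_ifs with hi
    · exact (max_eq_left (mem_filter.1 (hZ hi)).2).symm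
    · exact (max_eq_right (not_lt.1 fun h => hi (hP (mem_filter.2 ⟨mem_univ i, h⟩)))).symm

lemma diagCharCoeffT_add_nsmul_eq_iff [IsOrderedAddMonoid Γ] (d : Fin n → WithBot Γ) (c : Γ)
    {k : ℕ} (hk : k ≤ n) : diagCharCoeffT d k + ↑(k • c) = ∑ i, max (d i) ↑c ↔
      #{i | ↑c < d i} ≤ n - k ∧ n - k ≤ #{i | ↑c ≤ d i} := by
  rw [diagCharCoeffT_add_nsmul d c hk]
  constructor
  · intro h
    have hne : (powersetCard (n - k) (univ : Finset (Fin n))).Nonempty :=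
      powersetCard_nonempty.2 (by rw [card_univ, Fintype.card_fin]; omega)
    obtain ⟨K, hK, hKeq⟩ := exists_mem_eq_sup _ hne
      fun K : Finset (Fin n) => ∑ i, if i ∈ K then d i else (c : WithBot Γ)
    obtain ⟨hP, hZ⟩ := (sum_ite_mem_eq_sum_max_iff d c K).1 (hKeq ▸ h)
    obtain ⟨-, hKcard⟩ := mem_powersetCard.1 hK
    exact ⟨hKcard ▸ card_le_card hP, hKcard ▸ card_le_card hZ⟩
  · rintro ⟨h₁, h₂⟩
    obtain ⟨K, hPK, hKZ, hK⟩ := exists_subsuperset_card_eq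
      (monotone_filter_right _ fun _ _ => le_of_lt) h₁ h₂
    refine le_antisymm (Finset.sup_le fun K _ => sum_le_sum fun i _ => ite_le_sup _ _ _) ?_
    rw [← (sum_ite_mem_eq_sum_max_iff d c K).2 ⟨hPK, hKZ⟩]
    exact le_sup (f := fun K : Finset (Fin n) => ∑ i, if i ∈ K then d i else (c : WithBot Γ))
      (mem_powersetCard.2 ⟨subset_univ K, hK⟩)

lemma rootMultT_diagCharCoeffT_coe [IsOrderedAddMonoid Γ] (d : Fin n → WithBot Γ) (c : Γ) :
    rootMultT n (diagCharCoeffT d) c = #{i | d i = c} := by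
  set P := #{i | ↑c < d i}
  set Z := #{i | ↑c ≤ d i}
  have hZ : Z = P + #{i | d i = c} := by
    rw [← card_union_of_disjoint (disjoint_filter.2 fun i _ h h' => h.ne' h'), ← filter_or]
    simp only [Z, le_iff_lt_or_eq, eq_comm]
  have hZn : Z ≤ n := (card_filter_le _ _).trans_eq (by simp)
  have hle : ∀ k, diagCharCoeffT d k + ↑(k • c) ≤ ∑ i, max (d i) ↑c := fun k => by
    by_cases hk : k ≤ n
    · rw [diagCharCoeffT_add_nsmul d c hk]
      exact Finset.sup_le fun K _ => sum_le_sum fun i _ => ite_le_sup _ _ _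
    · rw [diagCharCoeffT, if_neg hk, WithBot.bot_add]
      exact bot_le
  have hmax : sumT (List.range (n + 1)) (fun l => diagCharCoeffT d l + ((l • c : Γ) : WithBot Γ)) =
      ∑ i, max (d i) ↑c := by
    refine le_antisymm (sumT_le fun k _ => hle k) ?_
    have hattain := (diagCharCoeffT_add_nsmul_eq_iff d c (Nat.sub_le n P)).2 ⟨by omega, by omega⟩
    exact hattain.symm.le.trans (le_sumT (fun l => diagCharCoeffT d l + ((l • c : Γ) : WithBot Γ))
      (List.mem_range.2 (by omega)))
  have hset : {k | k ≤ n ∧ diagCharCoeffT d k + ↑(k • c) =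
      sumT (List.range (n + 1)) (fun l => diagCharCoeffT d l + ((l • c : Γ) : WithBot Γ))} =
      Set.Icc (n - Z) (n - P) := by
    ext k
    rw [Set.mem_ofPred_eq, hmax, Set.mem_Icc]
    constructor
    · rintro ⟨hk, h⟩
      have := (diagCharCoeffT_add_nsmul_eq_iff d c hk).1 h
      omega
    · rintro ⟨h₁, h₂⟩
      exact ⟨by omega, (diagCharCoeffT_add_nsmul_eq_iff d c (by omega)).2 ⟨by omega, by omega⟩⟩
  show sSup _ - sInf _ = _
  rw [hset, csSup_Icc (by omega), csInf_Icc (by omega)]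
  omega

lemma rootMultT_diagCharCoeffT [IsOrderedAddMonoid Γ] (d : Fin n → WithBot Γ) (x : WithBot Γ) :
    rootMultT n (diagCharCoeffT d) x = #{i | d i = x} := by
  induction x using WithBot.recBotCoe with
  | bot => exact rootMultT_diagCharCoeffT_bot d
  | coe c => exact rootMultT_diagCharCoeffT_coe d c

end DiagonalCharPoly

/-- for a TPSD matrix A, the multiset of 𝕋max-algebraic
eigenvalues of |A| (i.e. the multiplicity of every x ∈ 𝕋max as a root of the
𝕋max-characteristic polynomial of |A|) equals the multiset of diagonal
entries of |A|. -/
theorem tmax_eigenvalues_of_tpsd {Γ : Type} [AddCommGroup Γ] [LinearOrder Γ] [IsOrderedAddMonoid Γ]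
    [Nontrivial Γ] (hdiv : DivisibleGrp Γ) {n : ℕ}
    (A : Matrix (Fin n) (Fin n) (Smax Γ)) (hsym : SymmS A) (hsgn : MatSigned A)
    (hTPSD : TPSD A) :
    ∀ x : WithBot Γ,
      rootMultT n (charCoeffT (Matrix.of fun i j => smod (A i j))) x =
        (Finset.univ.filter (fun i : Fin n => smod (A i i) = x)).card := by
  have := hdiv.denselyOrdered
  intro x
  rw [charCoeffT_eq_diagCharCoeffT (Matrix.of fun i j => smod (A i j))
    (smod_add_smod_le_of_tpsd hsym hsgn hTPSD)]
  exact rootMultT_diagCharCoeffT (fun i => smod (A i i)) x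

end TropPaper
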